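/- arXiv:1802.08387 — 2 statements merged into one kernel-verified Lean document; each statement's English description precedes it below -/
import Mathlib

section
/- Let G be a nilpotent group of nilpotency class c that is generated by d elements, with d ≥ 2. Then every subgroup H of G can be generated by at most d^c elements. -/
/-!
Let `N = γ_c(G)` be the last nontrivial term of the lower central series. It is central, hence
abelian, and it is generated by the left-normed commutators `[a₁, a₂, …, a_c]` of generators with
`a₁ ≠ a₂`, of which there are at most `d^c - d^(c-1)`. In an abelian group generated by `n`
elements every subgroup is generated by `n` elements (peel off one generator at a time: modulo the
others the group is cyclic), so `H ∩ N` needs at most `d^c - d^(c-1)` generators; by induction on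
the class, the image of `H` in `G/N` needs at most `d^(c-1)`. Lifting the latter to `H` and adding
the former generates `H`.
-/

open Subgroup
open scoped commutatorElement

namespace Subgroup

variable {G Q : Type*} [Group G] [Group Q]

def RankLE (H : Subgroup G) (n : ℕ) : Prop :=
  ∃ S : Finset G, S.card ≤ n ∧ closure (S : Set G) = H

theorem RankLE.mono {H : Subgroup G} {m n : ℕ} (h : H.RankLE m) (hmn : m ≤ n) : H.RankLE n :=
  let ⟨S, hS, hSH⟩ := h
  ⟨S, hS.trans hmn, hSH⟩

theorem rankLE_bot (n : ℕ) : (⊥ : Subgroup G).RankLE n :=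
  ⟨∅, by simp, by simp⟩

theorem rankLE_one_of_le_zpowers {H : Subgroup G} {g : G} (hH : H ≤ zpowers g) : H.RankLE 1 := by
  have : IsCyclic H := isCyclic_of_injective (inclusion hH) (inclusion_injective hH)
  obtain ⟨x, hx⟩ := (H.isCyclic_iff_exists_zpowers_eq_top).mp this
  exact ⟨{x}, by simp, by simpa [← zpowers_eq_closure]⟩

theorem RankLE.map {H : Subgroup G} {n : ℕ} (f : G →* Q) (h : H.RankLE n) :
    (H.map f).RankLE n := by
  classical
  obtain ⟨S, hS, rfl⟩ := h
  exact ⟨S.image f, Finset.card_image_le.trans hS, by simp [MonoidHom.map_closure]⟩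

theorem RankLE.of_map_of_inf_ker {H : Subgroup G} {m n : ℕ} {f : G →* Q}
    (hmap : (H.map f).RankLE m) (hker : (H ⊓ f.ker).RankLE n) : H.RankLE (m + n) := by
  classical
  obtain ⟨T, hT, hTH⟩ := hmap
  obtain ⟨S₂, hS₂, hS₂H⟩ := hker
  have hT_sub : (T : Set Q) ⊆ f '' H := by
    rw [← coe_map, ← hTH]; exact subset_closure
  set S₁ := T.image (Function.invFunOn f H)
  have hS₁_sub : closure (S₁ : Set G) ≤ H := by
    rw [closure_le, Finset.coe_image]
    rintro _ ⟨t, ht, rfl⟩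
    exact Function.invFunOn_mem (hT_sub ht)
  have hS₁_image : S₁.image f = T := by
    rw [Finset.image_image]
    exact (Finset.image_congr fun t ht => Function.invFunOn_eq (hT_sub ht)).trans Finset.image_id
  have hS₁_map : (closure (S₁ : Set G)).map f = H.map f := by
    rw [MonoidHom.map_closure, ← Finset.coe_image, hS₁_image, hTH]
  refine ⟨S₁ ∪ S₂, (Finset.card_union_le _ _).trans
    (add_le_add (Finset.card_image_le.trans hT) hS₂), le_antisymm ?_ fun x hx => ?_⟩
  · rw [Finset.coe_union, closure_union, hS₂H]
    exact sup_le hS₁_sub inf_le_left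
  · obtain ⟨y, hy, z, hz, rfl⟩ := mem_sup_of_normal_right.mp
      (map_le_map_iff.mp hS₁_map.ge hx)
    have hzH : z ∈ H := by simpa using mul_mem (inv_mem (hS₁_sub hy)) hx
    rw [Finset.coe_union, closure_union, hS₂H]
    exact mul_mem (mem_sup_left hy) (mem_sup_right ⟨hzH, hz⟩)

theorem rankLE_of_le_closure [IsMulCommutative G] (T : Finset G) {H : Subgroup G}
    (hH : H ≤ closure (T : Set G)) : H.RankLE T.card := by
  classical
  induction T using Finset.induction_on generalizing H with
  | empty =>
    rw [le_bot_iff.mp (by simpa using hH : H ≤ ⊥)]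
    exact rankLE_bot 0
  | insert t T ht ih =>
    let π := QuotientGroup.mk' (closure (T : Set G))
    have hmap : H.map π ≤ zpowers (π t) := by
      calc H.map π ≤ (closure {t} ⊔ closure (T : Set G)).map π := by
            rw [← closure_union]; exact map_mono (by simpa using hH)
        _ = zpowers (π t) := by
            rw [map_sup, QuotientGroup.map_mk'_self, sup_bot_eq, MonoidHom.map_closure,
              Set.image_singleton, zpowers_eq_closure]
    have hker : H ⊓ π.ker ≤ closure (T : Set G) := by
      rw [QuotientGroup.ker_mk']; exact inf_le_right
    rw [Finset.card_insert_of_notMem ht, add_comm]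
    exact (rankLE_one_of_le_zpowers hmap).of_map_of_inf_ker (ih hker)

theorem rankLE_of_le_of_isMulCommutative {K H : Subgroup G} [IsMulCommutative K] {T : Finset G}
    (hT : closure (T : Set G) = K) (hH : H ≤ K) : H.RankLE T.card := by
  classical
  let T' : Finset K := T.preimage (↑) Subtype.val_injective.injOn
  have hT' : closure (T' : Set K) = ⊤ := by
    subst hT; simp [T', closure_closure_coe_preimage]
  have := (rankLE_of_le_closure T' (H := H.subgroupOf K) (by rw [hT']; exact le_top)).map K.subtype
  rw [subgroupOf_map_subtype, inf_eq_left.mpr hH] at this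
  exact this.mono ((Finset.card_preimage _ _ _).trans_le (Finset.card_filter_le _ _))

section CommutatorGenerators

variable {K L : Subgroup G}

theorem commutatorElement_mem_of_mem_closure_right (hL : ⁅⁅K, (⊤ : Subgroup G)⁆, ⊤⁆ ≤ L)
    {w : G} (hw : w ∈ K) {Y : Set G} (hY : ∀ y ∈ Y, ⁅w, y⁆ ∈ L) {g : G} (hg : g ∈ closure Y) :
    ⁅w, g⁆ ∈ L := by
  have hwK : ∀ g, ⁅w, g⁆ ∈ ⁅K, ⊤⁆ := fun g => commutator_mem_commutator hw (mem_top g)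
  induction hg using closure_induction with
  | mem y hy => exact hY y hy
  | one => simp
  | mul g h _ _ ihg ihh =>
    rw [show ⁅w, g * h⁆ = ⁅w, g⁆ * ⁅w, h⁆ * ⁅⁅w, h⁆⁻¹, g⁆ by group]
    exact mul_mem (mul_mem ihg ihh) (hL (commutator_mem_commutator (inv_mem (hwK h)) (mem_top g)))
  | inv g _ ihg =>
    rw [show ⁅w, g⁻¹⁆ = ⁅w, g⁆⁻¹ * ⁅⁅w, g⁆, g⁻¹⁆ by group]
    exact mul_mem (inv_mem ihg) (hL (commutator_mem_commutator (hwK g) (mem_top _)))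

theorem commutatorElement_mem_of_mem_closure_left (hL : ⁅⁅K, (⊤ : Subgroup G)⁆, ⊤⁆ ≤ L)
    {X : Set G} (hXK : closure X ≤ K) (hX : ∀ x ∈ X, ∀ g, ⁅x, g⁆ ∈ L) {k : G}
    (hk : k ∈ closure X) (g : G) : ⁅k, g⁆ ∈ L := by
  have hxK : ∀ x ∈ closure X, ∀ g, ⁅x, g⁆ ∈ ⁅K, ⊤⁆ := fun x hx g =>
    commutator_mem_commutator (hXK hx) (mem_top g)
  induction hk using closure_induction generalizing g with
  | mem x hx => exact hX x hx g
  | one => simp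
  | mul x y _ hy ihx ihy =>
    rw [show ⁅x * y, g⁆ = ⁅y, g⁆ * ⁅⁅y, g⁆⁻¹, x⁆ * ⁅x, g⁆ by group]
    exact mul_mem (mul_mem (ihy g)
      (hL (commutator_mem_commutator (inv_mem (hxK y hy g)) (mem_top x)))) (ihx g)
  | inv x hx ihx =>
    rw [show ⁅x⁻¹, g⁆ = ⁅x, g⁆⁻¹ * ⁅⁅x, g⁆, x⁻¹⁆ by group]
    exact mul_mem (inv_mem (ihx g)) (hL (commutator_mem_commutator (hxK x hx g) (mem_top _)))

theorem commutator_top_le_closure_image2_sup [K.Normal] {A W : Set G} (hA : closure A = ⊤)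
    (hWK : W ⊆ K) (hK : K ≤ closure W ⊔ ⁅K, ⊤⁆) :
    ⁅K, (⊤ : Subgroup G)⁆ ≤ closure (Set.image2 (⁅·, ·⁆) W A) ⊔ ⁅⁅K, (⊤ : Subgroup G)⁆, ⊤⁆ := by
  set L := closure (Set.image2 (⁅·, ·⁆) W A) ⊔ ⁅⁅K, (⊤ : Subgroup G)⁆, ⊤⁆
  have hL : ⁅⁅K, (⊤ : Subgroup G)⁆, ⊤⁆ ≤ L := le_sup_right
  have hW : ∀ w ∈ W, ∀ g, ⁅w, g⁆ ∈ L := fun w hw g =>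
    commutatorElement_mem_of_mem_closure_right hL (hWK hw)
      (fun a ha => mem_sup_left (subset_closure (Set.mem_image2_of_mem hw ha))) (hA ▸ mem_top g)
  have hX : ∀ x ∈ W ∪ (⁅K, ⊤⁆ : Subgroup G), ∀ g, ⁅x, g⁆ ∈ L := by
    rintro x (hx | hx) g
    · exact hW x hx g
    · exact hL (commutator_mem_commutator hx (mem_top g))
  have hXK : closure (W ∪ (⁅K, ⊤⁆ : Subgroup G)) ≤ K := by
    rw [closure_le]; exact Set.union_subset hWK (commutator_le_left K ⊤)
  rw [commutator_le]
  intro k hk g _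
  refine commutatorElement_mem_of_mem_closure_left hL hXK hX ?_ g
  rw [closure_union, closure_eq]
  exact hK hk

end CommutatorGenerators

end Subgroup

section LeftNormedCommutators

variable {G : Type*} [Group G] [DecidableEq G]

/-- The commutators `⁅⁅⁅a₀, a₁⁆, a₂⁆, …, a_(j+1)⁆` of weight `j + 2` in elements of `A`, with
`a₀ ≠ a₁` (as `⁅a, a⁆ = 1`, the others are trivial). -/
def leftNormedCommutators (A : Finset G) : ℕ → Finset G
  | 0 => A.offDiag.image fun p => ⁅p.1, p.2⁆
  | j + 1 => Finset.image₂ (⁅·, ·⁆) (leftNormedCommutators A j) A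

theorem leftNormedCommutators_subset (A : Finset G) :
    ∀ j, (leftNormedCommutators A j : Set G) ⊆ (⊤ : Subgroup G).lowerCentralSeries (j + 1)
  | 0 => by
    simp only [leftNormedCommutators, Finset.coe_image, Set.image_subset_iff]
    exact fun p _ => commutator_mem_commutator (mem_top p.1) (mem_top p.2)
  | j + 1 => by
    simp only [leftNormedCommutators, Finset.coe_image₂, Set.image2_subset_iff]
    exact fun w hw a _ =>
      commutator_mem_commutator (leftNormedCommutators_subset A j hw) (mem_top a)

theorem card_leftNormedCommutators_le {A : Finset G} {d : ℕ} (hA : A.card ≤ d) :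
    ∀ j, (leftNormedCommutators A j).card ≤ d ^ (j + 2) - d ^ (j + 1)
  | 0 => calc
      _ ≤ A.offDiag.card := Finset.card_image_le
      _ = A.card * (A.card - 1) := by rw [Finset.offDiag_card, Nat.mul_sub_one]
      _ ≤ d * (d - 1) := Nat.mul_le_mul hA (Nat.sub_le_sub_right hA 1)
      _ = d ^ 2 - d ^ 1 := by rw [Nat.mul_sub_one, pow_two, pow_one]
  | j + 1 => calc
      _ ≤ (leftNormedCommutators A j).card * A.card := Finset.card_image₂_le _ _ _
      _ ≤ (d ^ (j + 2) - d ^ (j + 1)) * d :=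
        Nat.mul_le_mul (card_leftNormedCommutators_le hA j) hA
      _ = d ^ (j + 3) - d ^ (j + 2) := by rw [Nat.sub_mul, ← pow_succ, ← pow_succ]

theorem lowerCentralSeries_le_closure_leftNormedCommutators_sup {A : Finset G}
    (hA : closure (A : Set G) = ⊤) :
    ∀ j, (⊤ : Subgroup G).lowerCentralSeries (j + 1) ≤
      closure (leftNormedCommutators A j : Set G) ⊔ (⊤ : Subgroup G).lowerCentralSeries (j + 2)
  | 0 => by
    refine (commutator_top_le_closure_image2_sup (K := ⊤) hA (fun a _ => mem_top a)
      (by rw [hA]; exact le_sup_left)).trans (sup_le_sup_right ?_ _)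
    rw [closure_le, Set.image2_subset_iff]
    intro a ha b hb
    rcases eq_or_ne a b with rfl | hab
    · simp
    · exact subset_closure (by simpa [leftNormedCommutators] using ⟨a, b, ⟨ha, hb, hab⟩, rfl⟩)
  | j + 1 => by
    have := commutator_top_le_closure_image2_sup hA (leftNormedCommutators_subset A j)
      (lowerCentralSeries_le_closure_leftNormedCommutators_sup hA j)
    rwa [← Finset.coe_image₂] at this

theorem closure_leftNormedCommutators {A : Finset G} (hA : closure (A : Set G) = ⊤) {j : ℕ}
    (hj : (⊤ : Subgroup G).lowerCentralSeries (j + 2) = ⊥) :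
    closure (leftNormedCommutators A j : Set G) = (⊤ : Subgroup G).lowerCentralSeries (j + 1) :=
  le_antisymm (closure_le _ |>.mpr (leftNormedCommutators_subset A j))
    (by simpa only [hj, sup_bot_eq] using
      lowerCentralSeries_le_closure_leftNormedCommutators_sup hA j)

end LeftNormedCommutators

theorem rankLE_pow_of_lowerCentralSeries_eq_bot {G : Type*} [Group G] {A : Finset G}
    (hA : closure (A : Set G) = ⊤) {d : ℕ} (hAd : A.card ≤ d) {c : ℕ}
    (hc : (⊤ : Subgroup G).lowerCentralSeries c = ⊥) (H : Subgroup G) : H.RankLE (d ^ c) := by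
  classical
  induction c generalizing G with
  | zero =>
    rw [eq_bot_iff.mpr (hc ▸ le_top : H ≤ ⊥)]
    exact rankLE_bot _
  | succ c ih =>
    rcases c with _ | c
    · have : IsMulCommutative (⊤ : Subgroup G) := commutator_self_eq_bot_iff.mp hc
      simpa using (rankLE_of_le_of_isMulCommutative hA le_top).mono hAd
    set N := (⊤ : Subgroup G).lowerCentralSeries (c + 1)
    have : IsMulCommutative N := commutator_self_eq_bot_iff.mp
      (le_bot_iff.mp (hc ▸ commutator_mono le_rfl le_top))
    let π := QuotientGroup.mk' N
    have hπ : Function.Surjective π := QuotientGroup.mk'_surjective N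
    have hmap : (H.map π).RankLE (d ^ (c + 1)) := by
      refine ih (A := A.image π) ?_ (Finset.card_image_le.trans hAd) ?_ _
      · rw [Finset.coe_image, ← MonoidHom.map_closure, hA, map_top_of_surjective π hπ]
      · rw [← map_top_of_surjective π hπ, ← map_lowerCentralSeries, Subgroup.map_eq_bot_iff,
          QuotientGroup.ker_mk']
    have hker : (H ⊓ π.ker).RankLE (d ^ (c + 1 + 1) - d ^ (c + 1)) := by
      rw [QuotientGroup.ker_mk']
      exact (rankLE_of_le_of_isMulCommutative (closure_leftNormedCommutators hA hc)
        inf_le_right).mono (card_leftNormedCommutators_le hAd c)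
    have hpow : d ^ (c + 1) ≤ d ^ (c + 1 + 1) := by
      rcases d.eq_zero_or_pos with rfl | hd
      · simp
      · exact Nat.pow_le_pow_right hd (by omega)
    exact (hmap.of_map_of_inf_ker hker).mono (by omega)

theorem stmt_0_general {G : Type*} [Group G] [Group.FG G] (c d : ℕ)
    (hclass : (⊤ : Subgroup G).lowerCentralSeries c = ⊥) (hgen : Group.rank G ≤ d)
    (H : Subgroup G) :
    ∃ S : Finset G, (S : Set G) ⊆ H ∧ S.card ≤ d ^ c ∧ Subgroup.closure (S : Set G) = H := by
  obtain ⟨A, hA_card, hA⟩ := Group.rank_spec G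
  obtain ⟨S, hS_card, hS⟩ :=
    rankLE_pow_of_lowerCentralSeries_eq_bot hA (hA_card.trans_le hgen) hclass H
  exact ⟨S, hS ▸ subset_closure, hS_card, hS⟩

/-- If `G` is a nilpotent group of nilpotency class `c` generated by at most `d ≥ 2`
elements, then every subgroup `H` of `G` can be generated by at most `d ^ c` elements. -/
theorem stmt_0 {G : Type*} [Group G] [Group.FG G] (c d : ℕ) (hd : 2 ≤ d)
    (hclass : (⊤ : Subgroup G).lowerCentralSeries c = ⊥) (hgen : Group.rank G ≤ d)
    (H : Subgroup G) :
    ∃ S : Finset G, (S : Set G) ⊆ H ∧ S.card ≤ d ^ c ∧ Subgroup.closure (S : Set G) = H :=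
  stmt_0_general c d hclass hgen H
end

section
/- Let G = H ⋊ (Z/2Z) be a semidirect product, and let α : H^{(2)} → H^{(2)} be the automorphism of the F_2-vector space H^{(2)} = H/H(X^2) induced by the action of the nontrivial element of Z/2Z on H. Then G^{(2)} is isomorphic to (H^{(2)}/(1+α)(H^{(2)})) ⊕ Z/2Z. -/
def sq2 (G : Type*) [Group G] : Subgroup G :=
  Subgroup.normalClosure {g : G | ∃ x : G, g = x ^ 2}

instance sq2_normal (G : Type*) [Group G] : (sq2 G).Normal :=
  Subgroup.normalClosure_normal

lemma sq_mem_sq2 {G : Type*} [Group G] (g : G) : g ^ 2 ∈ sq2 G :=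
  Subgroup.subset_normalClosure ⟨g, rfl⟩

lemma sq2_quot_exp2 {G : Type*} [Group G] (x : G ⧸ sq2 G) : x ^ 2 = 1 := by
  induction x using QuotientGroup.induction_on with
  | H g =>
    rw [← QuotientGroup.mk_pow, QuotientGroup.eq_one_iff]
    exact sq_mem_sq2 g

lemma exp2_inv {G : Type*} [Group G] (h : ∀ x : G, x ^ 2 = 1) (a : G) : a⁻¹ = a := by
  have := h a
  rw [pow_two] at this
  exact inv_eq_of_mul_eq_one_right this

lemma exp2_comm {G : Type*} [Group G] (h : ∀ x : G, x ^ 2 = 1) (a b : G) :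
    a * b = b * a := by
  calc a * b = (a * b)⁻¹ := (exp2_inv h _).symm
  _ = b⁻¹ * a⁻¹ := mul_inv_rev a b
  _ = b * a := by rw [exp2_inv h, exp2_inv h]

lemma zmod2_exp2 (t : Multiplicative (ZMod 2)) : t ^ 2 = 1 := by revert t; decide

section Main

variable {H : Type*} [Group H] (φ : Multiplicative (ZMod 2) →* MulAut H)
    (α : (H ⧸ sq2 H) →* (H ⧸ sq2 H))

local notation "G'" => H ⋊[φ] Multiplicative (ZMod 2)
abbrev HAT : Prop := ∀ h : H, α (QuotientGroup.mk h) =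
      QuotientGroup.mk (φ (Multiplicative.ofAdd (1 : ZMod 2)) h)

def Nsub : Subgroup (H ⧸ sq2 H) :=
  Subgroup.normalClosure {y : H ⧸ sq2 H | ∃ x, y = x * α x}

instance : (Nsub α).Normal := Subgroup.normalClosure_normal

/-- The double projection `H → Q`. -/
def mkmk : H →* (H ⧸ sq2 H) ⧸ Nsub α :=
  (QuotientGroup.mk' _).comp (QuotientGroup.mk' (sq2 H))

lemma Q_exp2 (x : (H ⧸ sq2 H) ⧸ Nsub α) : x ^ 2 = 1 := by
  induction x using QuotientGroup.induction_on with
  | H q =>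
    rw [← QuotientGroup.mk_pow, sq2_quot_exp2 q]
    rfl

lemma target_exp2 (p : ((H ⧸ sq2 H) ⧸ Nsub α) × Multiplicative (ZMod 2)) :
    p ^ 2 = 1 := by
  rw [Prod.pow_def, Q_exp2 α, zmod2_exp2]
  rfl

lemma mkmk_phi (hα : HAT φ α) (t : Multiplicative (ZMod 2)) (h : H) :
    mkmk α (φ t h) = mkmk α h := by
  have ht : t = 1 ∨ t = Multiplicative.ofAdd 1 := by revert t; decide
  rcases ht with rfl | rfl
  · simp [mkmk]
  · show (QuotientGroup.mk (QuotientGroup.mk (φ (Multiplicative.ofAdd 1) h)) :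
        (H ⧸ sq2 H) ⧸ Nsub α) = QuotientGroup.mk (QuotientGroup.mk h)
    rw [← hα h, QuotientGroup.eq]
    have hinv : (α (QuotientGroup.mk h))⁻¹ = α (QuotientGroup.mk h) :=
      exp2_inv sq2_quot_exp2 _
    rw [hinv, exp2_comm sq2_quot_exp2]
    exact Subgroup.subset_normalClosure ⟨QuotientGroup.mk h, rfl⟩

/-- forward hom `G' → Q × ℤ/2`. -/
def fwd (hα : HAT φ α) : G' →* ((H ⧸ sq2 H) ⧸ Nsub α) × Multiplicative (ZMod 2) where
  toFun g := (mkmk α g.left, g.right)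
  map_one' := by simp
  map_mul' g₁ g₂ := by
    ext
    · show mkmk α (g₁.left * φ g₁.right g₂.left) = _
      rw [map_mul, mkmk_phi φ α hα]
      rfl
    · rfl

lemma fwd_kills (hα : HAT φ α) : sq2 G' ≤ (fwd φ α hα).ker := by
  apply Subgroup.normalClosure_le_normal
  rintro g ⟨x, rfl⟩
  show fwd φ α hα (x ^ 2) = 1
  rw [map_pow]
  exact target_exp2 α _

def fbar (hα : HAT φ α) :
    (G' ⧸ sq2 G') →* ((H ⧸ sq2 H) ⧸ Nsub α) × Multiplicative (ZMod 2) :=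
  QuotientGroup.lift _ (fwd φ α hα) (fwd_kills φ α hα)

/-- `H → G'⧸sq2 G'`. -/
def b1 : H →* G' ⧸ sq2 G' :=
  (QuotientGroup.mk' _).comp SemidirectProduct.inl

lemma b1_kills : sq2 H ≤ (b1 φ).ker := by
  apply Subgroup.normalClosure_le_normal
  rintro g ⟨x, rfl⟩
  show b1 φ (x ^ 2) = 1
  rw [map_pow]
  exact sq2_quot_exp2 _

def b1' : (H ⧸ sq2 H) →* G' ⧸ sq2 G' :=
  QuotientGroup.lift _ (b1 φ) (b1_kills φ)

lemma b1'_kills (hα : HAT φ α) : Nsub α ≤ (b1' φ).ker := by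
  apply Subgroup.normalClosure_le_normal
  rintro y ⟨x, rfl⟩
  induction x using QuotientGroup.induction_on with
  | H h =>
    show b1' φ (QuotientGroup.mk h * α (QuotientGroup.mk h)) = 1
    rw [hα h]
    show QuotientGroup.mk (SemidirectProduct.inl (h * φ (Multiplicative.ofAdd 1) h)) = 1
    rw [QuotientGroup.eq_one_iff]
    have key : (SemidirectProduct.inl (h * φ (Multiplicative.ofAdd 1) h) : G')
        = (⟨h, Multiplicative.ofAdd 1⟩ : G') ^ 2 := by
      rw [pow_two]
      ext
      · rw [SemidirectProduct.left_inl, SemidirectProduct.mul_left]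
      · rw [SemidirectProduct.right_inl, SemidirectProduct.mul_right]
        show (1 : Multiplicative (ZMod 2)) = Multiplicative.ofAdd 1 * Multiplicative.ofAdd 1
        decide
    rw [key]
    exact sq_mem_sq2 _

def b1'' (hα : HAT φ α) : ((H ⧸ sq2 H) ⧸ Nsub α) →* G' ⧸ sq2 G' :=
  QuotientGroup.lift _ (b1' φ) (b1'_kills φ α hα)

def b2 : Multiplicative (ZMod 2) →* G' ⧸ sq2 G' :=
  (QuotientGroup.mk' _).comp SemidirectProduct.inr

def bwd (hα : HAT φ α) :
    (((H ⧸ sq2 H) ⧸ Nsub α) × Multiplicative (ZMod 2)) →* G' ⧸ sq2 G' :=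
  MonoidHom.noncommCoprod (b1'' φ α hα) (b2 φ)
    (fun _ _ => (exp2_comm sq2_quot_exp2 _ _))

theorem main_equiv (hα : HAT φ α) :
    Nonempty ((G' ⧸ sq2 G') ≃*
      (((H ⧸ sq2 H) ⧸ Nsub α) × Multiplicative (ZMod 2))) := by
  refine ⟨{ toFun := fbar φ α hα, invFun := bwd φ α hα, map_mul' := map_mul _,
            left_inv := ?_, right_inv := ?_ }⟩
  · intro x
    induction x using QuotientGroup.induction_on with
    | H g =>
      show bwd φ α hα (fwd φ α hα g) = QuotientGroup.mk g
      show b1'' φ α hα (mkmk α g.left) * b2 φ g.right = _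
      show QuotientGroup.mk (SemidirectProduct.inl g.left) *
        QuotientGroup.mk (SemidirectProduct.inr g.right) = _
      rw [← QuotientGroup.mk_mul, SemidirectProduct.inl_left_mul_inr_right]
  · rintro ⟨q, t⟩
    induction q using QuotientGroup.induction_on with
    | H x =>
      induction x using QuotientGroup.induction_on with
      | H h =>
        show fbar φ α hα (b1'' φ α hα (mkmk α h) * b2 φ t) = _
        rw [map_mul]
        show fwd φ α hα (SemidirectProduct.inl h) * fwd φ α hα (SemidirectProduct.inr t) = _
        ext
        · show (mkmk α h * mkmk α ((SemidirectProduct.inr t : G').left) :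
            (H ⧸ sq2 H) ⧸ Nsub α) = _
          show mkmk α h * mkmk α 1 = _
          rw [map_one, mul_one]
          rfl
        · show (1 : Multiplicative (ZMod 2)) * t = t
          rw [one_mul]

end Main

/-- Let `G = H ⋊ ℤ/2ℤ` and let `α : H⁽²⁾ → H⁽²⁾` be the map on `H⁽²⁾ = H / H(X²)` induced by
the action of the nontrivial element of `ℤ/2ℤ` on `H`. Then
`G⁽²⁾ ≅ (H⁽²⁾ / (1+α)(H⁽²⁾)) ⊕ ℤ/2ℤ`. -/
theorem stmt_3 {H : Type*} [Group H] (φ : Multiplicative (ZMod 2) →* MulAut H)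
    (α : (H ⧸ sq2 H) →* (H ⧸ sq2 H))
    (hα : ∀ h : H, α (QuotientGroup.mk h) =
      QuotientGroup.mk (φ (Multiplicative.ofAdd (1 : ZMod 2)) h)) :
    Nonempty
      (((H ⋊[φ] Multiplicative (ZMod 2)) ⧸ sq2 (H ⋊[φ] Multiplicative (ZMod 2))) ≃*
        (((H ⧸ sq2 H) ⧸ Subgroup.normalClosure {y : H ⧸ sq2 H | ∃ x, y = x * α x}) ×
          Multiplicative (ZMod 2))) :=
  main_equiv φ α hα
end
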